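/- arXiv:2111.12962 — 3 statements merged into one kernel-verified Lean document; each statement's English description precedes it below -/
import Mathlib

section
/- Let Γ be an r×r positive definite matrix and Δ_s, Δ_t ∈ ℝ^r. Define W₁(a,b), W₂(a,b), W₃(a,b) as the entries of the 2×2 MSPE matrix so that W₁(a) = aᵀΓa − 2aᵀΔ_s + c_s, W₂(b) = bᵀΓb − 2bᵀΔ_t + c_t, W₃(a,b) = aᵀΓb − aᵀΔ_t − bᵀΔ_s + c_{st}, for constants c_s, c_t, c_{st}. If (a,b) is a critical point of the determinant W₁W₂ − W₃² at which W₁W₂ − W₃² ≠ 0, then Γa = Δ_s and Γb = Δ_t, i.e. a = Γ⁻¹Δ_s and b = Γ⁻¹Δ_t. -/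
open Matrix

/-- Theorem 2 of the paper (abstract form): at a critical point of the determinant
`W₁W₂ − W₃²` of the 2×2 MSPE matrix at which the determinant is nonzero, the
gradient conditions force `Γa = Δ_s`, `Γb = Δ_t`, i.e. `a = Γ⁻¹Δ_s`, `b = Γ⁻¹Δ_t`. -/
theorem joint_blip_critical_point {r : ℕ} (Γ : Matrix (Fin r) (Fin r) ℝ)
    (hΓ : Γ.PosDef) (Δs Δt : Fin r → ℝ) (cs ct cst : ℝ)
    (a b : Fin r → ℝ)
    (W₁ W₂ W₃ : ℝ)
    (hW₁ : W₁ = a ⬝ᵥ (Γ *ᵥ a) - 2 * (a ⬝ᵥ Δs) + cs)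
    (hW₂ : W₂ = b ⬝ᵥ (Γ *ᵥ b) - 2 * (b ⬝ᵥ Δt) + ct)
    (hW₃ : W₃ = a ⬝ᵥ (Γ *ᵥ b) - a ⬝ᵥ Δt - b ⬝ᵥ Δs + cst)
    -- gradient (critical point) conditions for the determinant `W₁W₂ − W₃²`:
    (hcrit₁ : W₂ • (Γ *ᵥ a - Δs) - W₃ • (Γ *ᵥ b - Δt) = 0)
    (hcrit₂ : W₁ • (Γ *ᵥ b - Δt) - W₃ • (Γ *ᵥ a - Δs) = 0)
    (hdet : W₁ * W₂ - W₃ ^ 2 ≠ 0) :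
    Γ *ᵥ a = Δs ∧ Γ *ᵥ b = Δt ∧ a = Γ⁻¹ *ᵥ Δs ∧ b = Γ⁻¹ *ᵥ Δt := by
  set u := Γ *ᵥ a - Δs with hu
  set v := Γ *ᵥ b - Δt with hv
  have h1 : W₂ • u = W₃ • v := by linear_combination (norm := module) hcrit₁
  have h2 : W₁ • v = W₃ • u := by linear_combination (norm := module) hcrit₂
  have hu0 : u = 0 := by
    have : (W₁ * W₂ - W₃ ^ 2) • u = 0 := by
      have h3 : (W₁ * W₂) • u = (W₃ * W₃) • u := by
        rw [← smul_smul, h1, smul_comm, h2, smul_smul]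
      rw [sub_smul, h3, sq, sub_self]
    exact (smul_eq_zero.mp this).resolve_left hdet
  have hv0 : v = 0 := by
    have : (W₁ * W₂ - W₃ ^ 2) • v = 0 := by
      have h3 : (W₁ * W₂) • v = (W₃ * W₃) • v := by
        rw [mul_comm, ← smul_smul, h2, smul_comm, h1, smul_smul]
      rw [sub_smul, h3, sq, sub_self]
    exact (smul_eq_zero.mp this).resolve_left hdet
  have ha : Γ *ᵥ a = Δs := by rwa [sub_eq_zero] at hu0
  have hb : Γ *ᵥ b = Δt := by rwa [sub_eq_zero] at hv0
  have hunit : IsUnit Γ.det := isUnit_iff_ne_zero.mpr (ne_of_gt hΓ.det_pos)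
  refine ⟨ha, hb, ?_, ?_⟩
  · rw [← ha, mulVec_mulVec, Matrix.nonsing_inv_mul _ hunit, one_mulVec]
  · rw [← hb, mulVec_mulVec, Matrix.nonsing_inv_mul _ hunit, one_mulVec]
end

section
/- Let Γ be positive definite r×r and Δ_s, Δ_t ∈ ℝ^r, with a* = Γ⁻¹Δ_s and b* = Γ⁻¹Δ_t. For any a, b ∈ ℝ^r, define the 2×2 matrix M(a,b) with entries M₁₁ = aᵀΓa − 2aᵀΔ_s + c_s, M₂₂ = bᵀΓb − 2bᵀΔ_t + c_t, M₁₂ = M₂₁ = aᵀΓb − aᵀΔ_t − bᵀΔ_s + c_{st}, where c_s, c_t, c_{st} are fixed constants. Then M(a,b) − M(a*,b*) is positive semidefinite for all a, b. -/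
/-!
Since `Γ a* = Δ_s` and `Γ b* = Δ_t`, each entry of `M(a, b)` is a polarized completed square:
`M(a, b) − M(a*, b*)` is the Gram matrix of `a − a*` and `b − b*` for the form `(x, y) ↦ xᵀ Γ y`,
i.e. `Uᵀ Γ U` with `U` the `r × 2` matrix of these columns, which is positive semidefinite.
-/

open Matrix

theorem Matrix.PosSemidef.gram {m n R : Type*} [Fintype m] [Fintype n] [CommRing R]
    [PartialOrder R] [StarRing R] [StarOrderedRing R] {Γ : Matrix n n R} (hΓ : Γ.PosSemidef)
    (u : m → n → R) :
    (of fun i j => star (u i) ⬝ᵥ (Γ *ᵥ u j)).PosSemidef := by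
  convert hΓ.conjTranspose_mul_mul_same (of u)ᵀ using 1
  ext i j
  simp only [of_apply, conjTranspose_apply, transpose_apply, mul_apply, dotProduct, mulVec,
    Pi.star_apply, Finset.mul_sum, Finset.sum_mul, mul_assoc]
  exact Finset.sum_comm

theorem Matrix.IsSymm.dotProduct_mulVec_sub_of_mulVec_eq {n R : Type*} [Fintype n] [CommRing R]
    {Γ : Matrix n n R} (hΓ : Γ.IsSymm) {a₀ b₀ d e : n → R}
    (ha₀ : Γ *ᵥ a₀ = d) (hb₀ : Γ *ᵥ b₀ = e) (a b : n → R) :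
    (a ⬝ᵥ (Γ *ᵥ b) - a ⬝ᵥ e - b ⬝ᵥ d) - (a₀ ⬝ᵥ (Γ *ᵥ b₀) - a₀ ⬝ᵥ e - b₀ ⬝ᵥ d) =
      (a - a₀) ⬝ᵥ (Γ *ᵥ (b - b₀)) := by
  have hswap (x y : n → R) : y ⬝ᵥ (Γ *ᵥ x) = x ⬝ᵥ (Γ *ᵥ y) := by
    rw [← dotProduct_transpose_mulVec, hΓ]
  subst ha₀ hb₀
  simp only [mulVec_sub, dotProduct_sub, sub_dotProduct, hswap b a₀, hswap b₀ a₀]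
  ring

/-- Complete MSPE matrix dominance of the joint BLIPs: with `a* = Γ⁻¹Δ_s` and
`b* = Γ⁻¹Δ_t`, the difference `M(a,b) − M(a*,b*)` of the 2×2 MSPE matrices is
positive semidefinite for all `a, b`. -/
theorem joint_blip_mspe_dominance {r : ℕ} (Γ : Matrix (Fin r) (Fin r) ℝ)
    (hΓ : Γ.PosDef) (Δs Δt : Fin r → ℝ) (cs ct cst : ℝ)
    (M : (Fin r → ℝ) → (Fin r → ℝ) → Matrix (Fin 2) (Fin 2) ℝ)
    (hM : ∀ a b, M a b =
      !![a ⬝ᵥ (Γ *ᵥ a) - 2 * (a ⬝ᵥ Δs) + cs,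
         a ⬝ᵥ (Γ *ᵥ b) - a ⬝ᵥ Δt - b ⬝ᵥ Δs + cst;
         a ⬝ᵥ (Γ *ᵥ b) - a ⬝ᵥ Δt - b ⬝ᵥ Δs + cst,
         b ⬝ᵥ (Γ *ᵥ b) - 2 * (b ⬝ᵥ Δt) + ct])
    (astar bstar : Fin r → ℝ)
    (hastar : astar = Γ⁻¹ *ᵥ Δs) (hbstar : bstar = Γ⁻¹ *ᵥ Δt) :
    ∀ a b, (M a b - M astar bstar).PosSemidef := by
  intro a b
  have hdet : IsUnit Γ.det := hΓ.isUnit.map detMonoidHom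
  have hΓa : Γ *ᵥ astar = Δs := by rw [hastar, mulVec_mulVec, mul_nonsing_inv _ hdet, one_mulVec]
  have hΓb : Γ *ᵥ bstar = Δt := by rw [hbstar, mulVec_mulVec, mul_nonsing_inv _ hdet, one_mulVec]
  have hsymm : Γ.IsSymm := hΓ.isHermitian
  have hgram : M a b - M astar bstar =
      of fun i j => ![a - astar, b - bstar] i ⬝ᵥ (Γ *ᵥ ![a - astar, b - bstar] j) := by
    have haa := hsymm.dotProduct_mulVec_sub_of_mulVec_eq hΓa hΓa a a
    have hab := hsymm.dotProduct_mulVec_sub_of_mulVec_eq hΓa hΓb a b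
    have hbb := hsymm.dotProduct_mulVec_sub_of_mulVec_eq hΓb hΓb b b
    have hba : (b - bstar) ⬝ᵥ (Γ *ᵥ (a - astar)) = (a - astar) ⬝ᵥ (Γ *ᵥ (b - bstar)) := by
      rw [← dotProduct_transpose_mulVec, hsymm]
    rw [hM, hM]
    ext i j
    fin_cases i <;> fin_cases j <;>
      simp only [Fin.zero_eta, Fin.mk_one, Fin.isValue, Matrix.sub_apply, of_apply, cons_val',
        cons_val_zero, cons_val_one, cons_val_fin_one] <;> linarith
  simpa [hgram] using hΓ.posSemidef.gram ![a - astar, b - bstar]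
end

section
/- Let Γ be positive definite r×r, Δ₁,…,Δ_ℓ ∈ ℝ^r, and constants c_{ij} (1 ≤ i ≤ j ≤ ℓ). For a₁,…,a_ℓ ∈ ℝ^r define the symmetric ℓ×ℓ matrix W(a) with W_{ij} = a_iᵀΓa_j − a_iᵀΔ_j − a_jᵀΔ_i + c_{ij}. Suppose W(a*) is positive definite where a*_i = Γ⁻¹Δ_i. Then for every choice of a₁,…,a_ℓ with W(a) positive semidefinite, det W(a*) ≤ det W(a) and trace W(a*) ≤ trace W(a); i.e., the simultaneous BLIPs minimize both the determinant and the trace of the MSPE matrix. -/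
/-!
Writing `a*_i = Γ⁻¹Δ_i`, so that `Δ_i = Γ a*_i`, and completing the square in each entry gives
`W(a) = G(a - a*) - (a*_i ⬝ Γ a*_j)_{ij} + c`, where `G(d)` is the `Γ`-Gram matrix of `d₁, …, d_ℓ`.
Hence `W(a) - W(a*) = G(a - a*)` is positive semidefinite, i.e. `W(a*) ≤ W(a)` in the Loewner
order. The trace is monotone for this order. So is the determinant above a positive definite
matrix `A`: writing `B - A = Cᴴ C`, one has `det B = det A · det (1 + C A⁻¹ Cᴴ)`, and the
determinant of `1 + M` for `M ⪰ 0` is the product of the numbers `1 + λ_i(M) ≥ 1`.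
-/

open Matrix

namespace Matrix

variable {n : Type*} [Fintype n]

theorem dotProduct_mulVec_sub_sub_eq {R : Type*} [CommRing R] {Γ : Matrix n n R} (hΓ : Γᵀ = Γ)
    (x y u v : n → R) :
    x ⬝ᵥ (Γ *ᵥ y) - x ⬝ᵥ (Γ *ᵥ v) - y ⬝ᵥ (Γ *ᵥ u) =
      (x - u) ⬝ᵥ (Γ *ᵥ (y - v)) - u ⬝ᵥ (Γ *ᵥ v) := by
  have hsymm : y ⬝ᵥ (Γ *ᵥ u) = u ⬝ᵥ (Γ *ᵥ y) := by
    rw [dotProduct_mulVec, ← mulVec_transpose, hΓ, dotProduct_comm]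
  rw [hsymm, mulVec_sub, dotProduct_sub, sub_dotProduct, sub_dotProduct]
  ring

theorem PosSemidef.gram_s14 {ι : Type*} [Fintype ι] {Γ : Matrix n n ℝ} (hΓ : Γ.PosSemidef)
    (d : ι → n → ℝ) : (of fun i j => d i ⬝ᵥ (Γ *ᵥ d j)).PosSemidef := by
  convert hΓ.mul_mul_conjTranspose_same (of d) using 1
  ext i j
  simp only [dotProduct, mulVec, Finset.mul_sum, of_apply, conjTranspose_eq_transpose_of_trivial,
    mul_apply, transpose_apply, Finset.sum_mul, mul_assoc]
  exact Finset.sum_comm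

theorem trace_le_trace_of_posSemidef_sub {R : Type*} [Ring R] [PartialOrder R] [StarRing R]
    [AddLeftMono R] {A B : Matrix n n R} (h : (B - A).PosSemidef) : A.trace ≤ B.trace :=
  sub_nonneg.mp (trace_sub B A ▸ h.trace_nonneg)

variable [DecidableEq n]

theorem PosSemidef.one_le_det_one_add {M : Matrix n n ℝ} (hM : M.PosSemidef) :
    1 ≤ (1 + M).det := by
  -- `det (1 + M) = (-1)^n · charpoly M (-1)`, and the charpoly factors over the eigenvalues.
  have hev := congrArg (Polynomial.eval (-1)) hM.1.charpoly_eq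
  rw [eval_charpoly, map_neg, map_one, ← neg_add'] at hev
  have hdet : (1 + M).det = ∏ i, (1 + hM.1.eigenvalues i) := by
    rw [← neg_neg (1 + M), det_neg, hev, Polynomial.eval_prod]
    simp only [Polynomial.eval_sub, Polynomial.eval_X, Polynomial.eval_C, RCLike.ofReal_real_eq_id,
      id, ← neg_add', Finset.prod_neg, Finset.card_univ, ← mul_assoc, ← mul_pow, neg_one_mul,
      neg_neg, one_pow, one_mul]
  rw [hdet]
  exact Finset.one_le_prod fun i _ => le_add_of_nonneg_right (hM.eigenvalues_nonneg i)

open scoped MatrixOrder in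
theorem PosDef.det_le_det_of_posSemidef_sub {A B : Matrix n n ℝ} (hA : A.PosDef)
    (h : (B - A).PosSemidef) : A.det ≤ B.det := by
  obtain ⟨C, hC⟩ := CStarAlgebra.nonneg_iff_eq_star_mul_self.mp h.nonneg
  have hB : B = A + Cᴴ * C := by rw [← star_eq_conjTranspose, ← hC]; abel
  have hdet : B.det = A.det * (1 + C * A⁻¹ * Cᴴ).det := by
    rw [hB, det_add_mul _ _ hA.det_pos.ne'.isUnit]
  rw [hdet]
  exact le_mul_of_one_le_right hA.det_pos.le
    (hA.inv.posSemidef.mul_mul_conjTranspose_same C).one_le_det_one_add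

end Matrix

theorem simultaneous_blip_det_trace_efficient_general {r ℓ : ℕ}
    (Γ : Matrix (Fin r) (Fin r) ℝ) (hΓ : Γ.PosDef)
    (Δ : Fin ℓ → Fin r → ℝ) (c : Fin ℓ → Fin ℓ → ℝ)
    (W : (Fin ℓ → Fin r → ℝ) → Matrix (Fin ℓ) (Fin ℓ) ℝ)
    (hW : ∀ a, W a = Matrix.of fun i j =>
      a i ⬝ᵥ (Γ *ᵥ a j) - a i ⬝ᵥ Δ j - a j ⬝ᵥ Δ i + c i j)
    (astar : Fin ℓ → Fin r → ℝ) (hastar : ∀ i, astar i = Γ⁻¹ *ᵥ Δ i)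
    (hWstar : (W astar).PosDef) :
    ∀ a, (W a).PosSemidef → (W astar).det ≤ (W a).det ∧
      (W astar).trace ≤ (W a).trace := by
  intro a _
  have hΓT : Γᵀ = Γ := by simpa using hΓ.isHermitian.eq
  have hΔ : ∀ i, Δ i = Γ *ᵥ astar i := fun i => by
    rw [hastar, mulVec_mulVec, mul_nonsing_inv _ hΓ.det_pos.ne'.isUnit, one_mulVec]
  have hgram : W a - W astar = of fun i j => (a i - astar i) ⬝ᵥ (Γ *ᵥ (a j - astar j)) := by
    ext i j
    simp only [hW, Matrix.sub_apply, of_apply, hΔ, dotProduct_mulVec_sub_sub_eq hΓT]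
    simp only [sub_self, zero_dotProduct]
    ring
  have hdev : (W a - W astar).PosSemidef := hgram ▸ hΓ.posSemidef.gram_s14 _
  exact ⟨hWstar.det_le_det_of_posSemidef_sub hdev, trace_le_trace_of_posSemidef_sub hdev⟩

/-- The simultaneous BLIPs `a*_i = Γ⁻¹Δ_i` minimize both the determinant and the
trace of the MSPE matrix `W(a)` among all predictor coefficient families `a`
with `W(a)` positive semidefinite, provided `W(a*)` is positive definite. -/
theorem simultaneous_blip_det_trace_efficient {r ℓ : ℕ}
    (Γ : Matrix (Fin r) (Fin r) ℝ) (hΓ : Γ.PosDef)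
    (Δ : Fin ℓ → Fin r → ℝ) (c : Fin ℓ → Fin ℓ → ℝ)
    (hc : ∀ i j, c i j = c j i)
    (W : (Fin ℓ → Fin r → ℝ) → Matrix (Fin ℓ) (Fin ℓ) ℝ)
    (hW : ∀ a, W a = Matrix.of fun i j =>
      a i ⬝ᵥ (Γ *ᵥ a j) - a i ⬝ᵥ Δ j - a j ⬝ᵥ Δ i + c i j)
    (astar : Fin ℓ → Fin r → ℝ) (hastar : ∀ i, astar i = Γ⁻¹ *ᵥ Δ i)
    (hWstar : (W astar).PosDef) :
    ∀ a, (W a).PosSemidef → (W astar).det ≤ (W a).det ∧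
      (W astar).trace ≤ (W a).trace :=
  simultaneous_blip_det_trace_efficient_general Γ hΓ Δ c W hW astar hastar hWstar
end
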